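/- Every nonempty tropically convex subset of R^n is contractible; in particular any nonempty intersection of sets of the form {x : max_i(x_i - a_i) ≤ max_i(x_i - b_i)} is contractible. -/

import Mathlib

noncomputable def tmax {n : ℕ} [NeZero n] (f : Fin n → ℝ) : ℝ :=
  Finset.univ.sup' Finset.univ_nonempty f

/-- A set is tropically convex if it is closed under tropical linear combinations. -/
def TropConvex {n : ℕ} (C : Set (Fin n → ℝ)) : Prop :=
  ∀ x ∈ C, ∀ y ∈ C, ∀ lam mu : ℝ, (fun i => max (lam + x i) (mu + y i)) ∈ C

lemma sup'_max' {ι : Type*} {s : Finset ι} (H : s.Nonempty) (f g : ι → ℝ) :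
    s.sup' H (fun i => max (f i) (g i)) = max (s.sup' H f) (s.sup' H g) := by
  apply le_antisymm
  · exact Finset.sup'_le _ _ fun i hi =>
      max_le_max (Finset.le_sup' f hi) (Finset.le_sup' g hi)
  · refine max_le (Finset.sup'_le _ _ fun i hi => ?_) (Finset.sup'_le _ _ fun i hi => ?_)
    · exact le_trans (le_max_left (f i) (g i)) (Finset.le_sup' (fun j => max (f j) (g j)) hi)
    · exact le_trans (le_max_right (f i) (g i)) (Finset.le_sup' (fun j => max (f j) (g j)) hi)

lemma tmax_tropcomb {n : ℕ} [NeZero n] (x y a : Fin n → ℝ) (lam mu : ℝ) :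
    tmax (fun i => max (lam + x i) (mu + y i) - a i) =
      max (lam + tmax (fun i => x i - a i)) (mu + tmax (fun i => y i - a i)) := by
  unfold tmax
  rw [Finset.add_sup', Finset.add_sup', ← sup'_max']
  congr 1
  funext i
  rw [← max_sub_sub_right]
  congr 1 <;> ring

lemma tropconvex_contractible {n : ℕ} [NeZero n] (C : Set (Fin n → ℝ))
    (hne : C.Nonempty) (hC : TropConvex C) : ContractibleSpace C := by
  obtain ⟨p, hp⟩ := hne
  rw [contractible_iff_id_nullhomotopic]
  refine ⟨⟨p, hp⟩, ⟨?_⟩⟩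
  -- auxiliary continuous real-valued data
  set m : (Fin n → ℝ) → ℝ := fun x => min 0 (Finset.univ.inf' Finset.univ_nonempty
    fun i => x i - p i) with hm
  set M : (Fin n → ℝ) → ℝ := fun x => max 0 (Finset.univ.sup' Finset.univ_nonempty
    fun i => x i - p i) with hM
  have hm_cont : Continuous m := by
    apply Continuous.min continuous_const
    have h : Continuous (Finset.univ.inf' Finset.univ_nonempty
        (fun i (x : Fin n → ℝ) => x i - p i)) :=
      Continuous.finset_inf' Finset.univ_nonempty fun i _ =>
        (continuous_apply i).sub continuous_const
    convert h using 1
    funext x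
    simp [Finset.inf'_apply]
  have hM_cont : Continuous M := by
    apply Continuous.max continuous_const
    have h : Continuous (Finset.univ.sup' Finset.univ_nonempty
        (fun i (x : Fin n → ℝ) => x i - p i)) :=
      Continuous.finset_sup' Finset.univ_nonempty fun i _ =>
        (continuous_apply i).sub continuous_const
    convert h using 1
    funext x
    simp [Finset.sup'_apply]
  have hm_le : ∀ x i, m x ≤ x i - p i := fun x i =>
    le_trans (min_le_right _ _) (Finset.inf'_le (fun j => x j - p j) (Finset.mem_univ i))
  have hM_ge : ∀ x i, x i - p i ≤ M x := fun x i =>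
    le_trans (Finset.le_sup' (fun j => x j - p j) (Finset.mem_univ i)) (le_max_right _ _)
  -- the homotopy
  refine ⟨⟨fun q => ⟨fun i =>
      max (-(max (2 * (q.1 : ℝ) - 1) 0 * M (q.2 : Fin n → ℝ)) + (q.2 : Fin n → ℝ) i)
        ((1 - min (2 * (q.1 : ℝ)) 1) * m (q.2 : Fin n → ℝ) + p i), ?_⟩, ?_⟩, ?_, ?_⟩
  · exact hC _ q.2.2 p hp _ _
  · -- continuity
    apply Continuous.subtype_mk
    apply continuous_pi
    intro i
    have ht : Continuous fun q : unitInterval × C => (q.1 : ℝ) :=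
      continuous_subtype_val.comp continuous_fst
    have hx : Continuous fun q : unitInterval × C => (q.2 : Fin n → ℝ) :=
      continuous_subtype_val.comp continuous_snd
    have h2t : Continuous fun q : unitInterval × C => (2 : ℝ) * (q.1 : ℝ) :=
      continuous_const.mul ht
    exact Continuous.max
      (((((h2t.sub continuous_const).max continuous_const).mul
        (hM_cont.comp hx)).neg).add ((continuous_apply i).comp hx))
      (((continuous_const.sub (h2t.min continuous_const)).mul
        (hm_cont.comp hx)).add continuous_const)
  · -- at t = 0 it is the identity
    intro x
    ext i
    simp only [Set.Icc.coe_zero, ContinuousMap.id_apply]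
    have h0 : (2 : ℝ) * 0 = 0 := by ring
    rw [h0]
    have h1 : max ((0 : ℝ) - 1) 0 = 0 := by norm_num
    have h2 : min (0 : ℝ) 1 = 0 := by norm_num
    rw [h1, h2]
    simp only [zero_mul, neg_zero, zero_add, sub_zero, one_mul]
    have : m (x : Fin n → ℝ) + p i ≤ (x : Fin n → ℝ) i := by
      have := hm_le (x : Fin n → ℝ) i; linarith
    exact max_eq_left this
  · -- at t = 1 it is the constant map p
    intro x
    ext i
    simp only [Set.Icc.coe_one]
    have h1 : max ((2 : ℝ) * 1 - 1) 0 = 1 := by norm_num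
    have h2 : (1 : ℝ) - min (2 * 1) 1 = 0 := by norm_num
    rw [h1, h2]
    simp only [one_mul, zero_mul, zero_add]
    have : -(M (x : Fin n → ℝ)) + (x : Fin n → ℝ) i ≤ p i := by
      have := hM_ge (x : Fin n → ℝ) i; linarith
    exact (max_eq_right this).trans rfl

theorem stmt9 {n : ℕ} [NeZero n] :
    (∀ C : Set (Fin n → ℝ), C.Nonempty → TropConvex C → ContractibleSpace C) ∧
    (∀ (ι : Type) (a b : ι → (Fin n → ℝ)),
      (⋂ k, {x : Fin n → ℝ |
        tmax (fun i => x i - a k i) ≤ tmax (fun i => x i - b k i)}).Nonempty →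
      ContractibleSpace
        (⋂ k, {x : Fin n → ℝ |
          tmax (fun i => x i - a k i) ≤ tmax (fun i => x i - b k i)})) := by
  constructor
  · exact fun C => tropconvex_contractible C
  · intro ι a b hne
    apply tropconvex_contractible _ hne
    intro x hx y hy lam mu
    rw [Set.mem_iInter] at hx hy ⊢
    intro k
    have hxk := hx k
    have hyk := hy k
    simp only [Set.mem_setOf_eq] at *
    rw [tmax_tropcomb, tmax_tropcomb]
    exact max_le_max (add_le_add_right hxk lam) (add_le_add_right hyk mu)
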